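/- arXiv:1211.4005 — 9 statements merged into one kernel-verified Lean document; each statement's English description precedes it below -/
import Mathlib

section
/- Let k be a (not necessarily commutative) unital ring and let n ≥ 2 be an integer. Fix an index i ∈ {1,…,n}. Let d : kⁿ → Mₙ(k) be the diagonal ring homomorphism (sending a tuple to the corresponding diagonal matrix) and let πᵢ : kⁿ → k be the projection onto the i-th coordinate. If R is any ring equipped with ring homomorphisms f : Mₙ(k) → R and g : k → R satisfying f ∘ d = g ∘ πᵢ, then R is the trivial ring (R has at most one element). -/
universe u v

theorem stmt_0 (k : Type u) [Ring k] (n : ℕ) (hn : 2 ≤ n) (i : Fin n)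
    (R : Type v) [Ring R]
    (f : Matrix (Fin n) (Fin n) k →+* R) (g : k →+* R)
    (hfg : f.comp (Matrix.diagonalRingHom (Fin n) k) =
      g.comp (Pi.evalRingHom (fun _ : Fin n => k) i)) :
    Subsingleton R := by
  obtain ⟨j, hj⟩ : ∃ j : Fin n, j ≠ i := by
    haveI : Nontrivial (Fin n) := Fin.nontrivial_iff_two_le.mpr hn
    exact exists_ne i
  have key : ∀ m : Fin n, f (Matrix.diagonal (Pi.single m (1 : k))) = g ((Pi.single m (1 : k) : Fin n → k) i) := by
    intro m
    exact congrFun (congrArg DFunLike.coe hfg) (Pi.single m (1 : k))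
  have hdiag : ∀ m : Fin n,
      Matrix.diagonal (Pi.single m (1 : k)) = Matrix.single m m 1 := by
    intro m
    ext a b
    by_cases hab : a = b
    · subst hab
      by_cases ham : a = m <;>
        simp [Matrix.diagonal, Matrix.single, Pi.single_apply, ham, eq_comm]
    · have hne : ¬(m = a ∧ m = b) := fun ⟨h1, h2⟩ => hab (h1 ▸ h2)
      simp [Matrix.diagonal_apply_ne _ hab, Matrix.single, hne]
  have hjj : f (Matrix.single j j 1) = 0 := by
    have := key j
    rw [hdiag] at this
    rw [this, Pi.single_eq_of_ne (Ne.symm hj), map_zero]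
  have hii1 : f (Matrix.single i i 1) = 1 := by
    have := key i
    rw [hdiag] at this
    rw [this, Pi.single_eq_same, map_one]
  have hmul : Matrix.single i j (1 : k) * Matrix.single j j 1 *
      Matrix.single j i 1 = Matrix.single i i 1 := by
    rw [Matrix.single_mul_single_same, Matrix.single_mul_single_same, one_mul, one_mul]
  have h10 : (1 : R) = 0 := by
    rw [← hii1, ← hmul, map_mul, map_mul, hjj, mul_zero, zero_mul]
  exact subsingleton_of_zero_eq_one h10.symm
end

section
/- Let k be a (not necessarily commutative) unital ring, n ≥ 2 an integer, and i ∈ {1,…,n}. In the category RingCat of unital rings, the commutative square with top arrow πᵢ : kⁿ → k (projection onto the i-th coordinate), left arrow d : kⁿ → Mₙ(k) (the diagonal embedding), and with both remaining arrows the unique ring homomorphisms to the trivial (zero) ring, is a pushout square. -/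
universe u

/-- The unique ring homomorphism from a ring to the trivial (one-element) ring. -/
def toTrivialRingHom (R : Type u) [Ring R] : R →+* PUnit.{u + 1} where
  toFun _ := PUnit.unit
  map_one' := rfl
  map_mul' _ _ := rfl
  map_zero' := rfl
  map_add' _ _ := rfl

/-!
A cocone `u : k → X`, `v : Mₙ(k) → X` over the span must send `Eᵢᵢ = d(eᵢ)` to `u 1 = 1`.
For `j ≠ i`, `Eᵢᵢ Eⱼⱼ = 0` then forces `v Eⱼⱼ = 0`, and `Eᵢᵢ = Eᵢⱼ Eⱼⱼ Eⱼᵢ` gives `1 = 0` in `X`.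
So every cocone point is a zero ring, and the trivial ring is its unique colimit.
-/

open CategoryTheory Limits

namespace Matrix

theorem subsingleton_of_map_single_same_eq_one {m k X : Type*} [Fintype m] [DecidableEq m]
    [Semiring k] [Semiring X] (g : Matrix m m k →+* X) {i j : m} (hij : i ≠ j)
    (h : g (single i i 1) = 1) : Subsingleton X := by
  have hj : g (single j j 1) = 0 := by
    rw [← one_mul (g _), ← h, ← map_mul, single_mul_single_of_ne (c := 1) i i j hij, map_zero]
  refine subsingleton_of_zero_eq_one ?_
  calc (0 : X) = g (single i j 1) * g (single j j 1) * g (single j i 1) := by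
        rw [hj, mul_zero, zero_mul]
    _ = g (single i i 1) := by simp only [← map_mul, single_mul_single_same, mul_one]
    _ = 1 := h

end Matrix

theorem RingCat.isPushout_toTrivialRingHom {A B C : Type u} [Ring A] [Ring B] [Ring C]
    (f : A →+* B) (g : A →+* C)
    (h : ∀ (X : Type u) [Ring X] (u : B →+* X) (v : C →+* X), u.comp f = v.comp g →
      Subsingleton X) :
    IsPushout (ofHom f) (ofHom g) (ofHom (toTrivialRingHom B)) (ofHom (toTrivialRingHom C)) := by
  refine ⟨⟨rfl⟩, ⟨PushoutCocone.IsColimit.mk _ (fun s => ?_) (fun s => ?_) (fun s => ?_)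
    (fun s m _ _ => ?_)⟩⟩
  all_goals
    have : Subsingleton s.pt := h s.pt s.inl.hom s.inr.hom (congrArg Hom.hom s.condition)
  · letI : Unique s.pt := uniqueOfSubsingleton 1
    exact ofHom RingEquiv.ofUnique.toRingHom
  all_goals ext; exact Subsingleton.elim _ _

theorem stmt_1 (k : Type u) [Ring k] (n : ℕ) (hn : 2 ≤ n) (i : Fin n) :
    CategoryTheory.IsPushout
      (RingCat.ofHom (Pi.evalRingHom (fun _ : Fin n => k) i))
      (RingCat.ofHom (Matrix.diagonalRingHom (Fin n) k))
      (RingCat.ofHom (toTrivialRingHom k))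
      (RingCat.ofHom (toTrivialRingHom (Matrix (Fin n) (Fin n) k))) := by
  have : Nontrivial (Fin n) := Fin.nontrivial_iff_two_le.mpr hn
  obtain ⟨j, hij⟩ := exists_ne i
  refine RingCat.isPushout_toTrivialRingHom _ _ fun X _ u v huv => ?_
  refine Matrix.subsingleton_of_map_single_same_eq_one v hij.symm ?_
  calc v (Matrix.single i i 1) = v (Matrix.diagonal (Pi.single i 1)) := by
        rw [Matrix.diagonal_single]
    _ = u ((Pi.single i 1 : Fin n → k) i) := (RingHom.congr_fun huv (Pi.single i 1)).symm
    _ = 1 := by rw [Pi.single_eq_same, map_one]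
end

section
/- Let k be a unital ring and n ≥ 2 an integer. Let J be a Grothendieck topology on the opposite category RingCatᵒᵖ of the category of unital rings, and suppose that the sieve on the object of RingCatᵒᵖ corresponding to kⁿ generated by the n morphisms opposite to the projections πᵢ : kⁿ → k (i = 1,…,n) is a J-covering sieve. Then for every ring R equipped with a unital ring homomorphism k → R, the sieve on the object of RingCatᵒᵖ corresponding to Mₙ(R) generated by the single morphism opposite to the unique ring homomorphism Mₙ(R) → 0 (where 0 is the trivial ring) is a J-covering sieve. -/
/-!
Pull the covering of `kⁿ` back along the diagonal embedding `kⁿ → Mₙ(R)`. A ring `S` lying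
over the `i`-th factor receives a map `Mₙ(R) → S` that kills the matrix unit `Eⱼⱼ` for some
`j ≠ i`. Since every `Eₗₗ = Eₗⱼ Eⱼⱼ Eⱼₗ` and `1 = ∑ₗ Eₗₗ`, this forces `1 = 0` in `S`, so every
arrow of the pulled-back covering factors through the trivial ring.
-/

universe u

open CategoryTheory Opposite

namespace Matrix

variable {n R S : Type*} [Fintype n] [DecidableEq n] [Semiring R] [Semiring S]

theorem subsingleton_of_map_single_eq_zero (t : Matrix n n R →+* S) (j : n)
    (h : t (single j j 1) = 0) : Subsingleton S := by
  refine subsingleton_of_zero_eq_one ?_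
  have hsingle (l : n) : single l l (1 : R) = single l j 1 * single j j 1 * single j l 1 := by
    rw [single_mul_single_same, single_mul_single_same, mul_one, mul_one]
  rw [← map_one t, ← sum_single_one, map_sum]
  exact (Finset.sum_eq_zero fun l _ => by rw [hsingle, map_mul, map_mul, h, mul_zero, zero_mul]).symm

theorem subsingleton_of_comp_diagonal_eq_comp_eval [Nontrivial n] {k : Type*} [Semiring k]
    (φ : k →+* R) (t : Matrix n n R →+* S) (g : k →+* S) (i : n)
    (h : t.comp (φ.mapMatrix.comp (diagonalRingHom n k)) = g.comp (Pi.evalRingHom _ i)) :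
    Subsingleton S := by
  obtain ⟨j, hji⟩ := exists_ne i
  refine subsingleton_of_map_single_eq_zero t j ?_
  simpa [diagonal_single, Pi.single_apply, hji.symm] using RingHom.congr_fun h (Pi.single j 1)

end Matrix

theorem RingCat.generate_singleton_toTrivialRingHom_op {X : Type u} [Ring X] {Z : RingCatᵒᵖ}
    [Subsingleton Z.unop] (f : Z ⟶ op (RingCat.of X)) :
    Sieve.generate (Presieve.singleton (RingCat.ofHom (toTrivialRingHom X)).op) f := by
  let : Unique Z.unop := uniqueOfSubsingleton 0
  refine ⟨_, (RingCat.ofHom (RingEquiv.ofUnique : PUnit.{u + 1} ≃+* Z.unop).toRingHom).op, _,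
    Presieve.singleton_self _, ?_⟩
  exact Quiver.Hom.unop_inj <| RingCat.hom_ext <| RingHom.ext fun _ => Subsingleton.elim _ _

theorem stmt_3 (k : Type u) [Ring k] (n : ℕ) (hn : 2 ≤ n)
    (J : GrothendieckTopology RingCat.{u}ᵒᵖ)
    (hJ : Sieve.generate
        (Presieve.ofArrows (fun _ : Fin n => op (RingCat.of k))
          (fun i => (RingCat.ofHom (Pi.evalRingHom (fun _ : Fin n => k) i)).op)) ∈
      J (op (RingCat.of (Fin n → k))))
    (R : Type u) [Ring R] (φ : k →+* R) :
    Sieve.generate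
        (Presieve.ofArrows (fun _ : PUnit.{1} => op (RingCat.of PUnit.{u + 1}))
          (fun _ => (RingCat.ofHom (toTrivialRingHom (Matrix (Fin n) (Fin n) R))).op)) ∈
      J (op (RingCat.of (Matrix (Fin n) (Fin n) R))) := by
  have : Nontrivial (Fin n) := Fin.nontrivial_iff_two_le.mpr hn
  let diag := RingCat.ofHom (φ.mapMatrix.comp (Matrix.diagonalRingHom (Fin n) k))
  refine J.superset_covering ?_ (J.pullback_stable diag.op hJ)
  rintro Z f ⟨Y, g, _, ⟨i⟩, hfac⟩
  have := Matrix.subsingleton_of_comp_diagonal_eq_comp_eval φ f.unop.hom g.unop.hom i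
    (congrArg (fun x => x.unop.hom) hfac).symm
  rw [Presieve.ofArrows_pUnit.{0}]
  exact RingCat.generate_singleton_toTrivialRingHom_op f
end

section
/- Let k be a unital ring and n ≥ 2 an integer. Let J be a Grothendieck topology on RingCatᵒᵖ such that the sieve on the object corresponding to kⁿ generated by the morphisms opposite to the projections πᵢ : kⁿ → k (i = 1,…,n) is J-covering. Let F be a presheaf of sets on RingCatᵒᵖ (equivalently, a functor RingCat → Set) that is a sheaf for J. Then for every ring R equipped with a unital ring homomorphism k → R, the map F(Mₙ(R)) → F(0) induced by applying F to the unique ring homomorphism Mₙ(R) → 0 is a bijection. -/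
/-!
Pull the covering sieve of projections back along the diagonal embedding `kⁿ → Mₙ(R)`.
A ring homomorphism `g : Mₙ(R) → S` in the pulled-back sieve factors through some
projection `πᵢ`, so it kills the idempotent `Eⱼⱼ` for every `j ≠ i`; then it kills every
`Eᵢᵢ = Eᵢⱼ Eⱼⱼ Eⱼᵢ`, and these sum to `1`, so the ring `S` is trivial. Hence the sieve
generated by the single arrow `Mₙ(R) → 0` is covering. That arrow is an epimorphism of rings,
so the sheaf condition for it says exactly that `F(Mₙ(R)) → F(0)` is bijective.
-/

universe u

open CategoryTheory Opposite

theorem CategoryTheory.Presieve.IsSheafFor.bijective_map_of_mono {C : Type*} [Category C]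
    {P : Cᵒᵖ ⥤ Type*} {X Y : C} {f : X ⟶ Y} [Mono f] (h : IsSheafFor P (.singleton f)) :
    Function.Bijective (P.map f.op) :=
  (Function.bijective_iff_existsUnique _).mpr fun x =>
    isSheafFor_singleton.mp h x fun p₁ p₂ hp => by rw [cancel_mono f |>.mp hp]

theorem Matrix.subsingleton_of_ringHom_single_eq_zero {ι R S : Type*} [Fintype ι]
    [DecidableEq ι] [Semiring R] [Semiring S] (g : Matrix ι ι R →+* S) (j : ι)
    (hj : g (single j j 1) = 0) : Subsingleton S := by
  have hdiag (i : ι) : g (single i i 1) = 0 := by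
    have : single i i (1 : R) = single i j 1 * single j j 1 * single j i 1 := by simp
    rw [this, map_mul, map_mul, hj, mul_zero, zero_mul]
  refine subsingleton_of_zero_eq_one ?_
  rw [← map_one g, ← sum_single_one, map_sum, Finset.sum_eq_zero fun i _ => hdiag i]

instance RingCat.epi_ofHom_toTrivialRingHom (A : Type u) [Ring A] :
    Epi (RingCat.ofHom (toTrivialRingHom A)) :=
  ⟨fun g h _ => RingCat.hom_ext <| RingHom.ext fun x => by
    rw [Subsingleton.elim x 1, map_one, map_one]⟩

theorem RingCat.generate_singleton_toTrivialRingHom_op_apply {A : Type u} [Ring A]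
    {Y : RingCat.{u}ᵒᵖ} (g : Y ⟶ op (RingCat.of A)) [Subsingleton Y.unop] :
    Sieve.generate (Presieve.singleton (RingCat.ofHom (toTrivialRingHom A)).op) g := by
  let _ : Unique Y.unop := uniqueOfSubsingleton 0
  refine ⟨op (RingCat.of PUnit), (RingCat.ofHom RingEquiv.ofUnique.toRingHom).op, _,
    Presieve.singleton.mk, ?_⟩
  exact Quiver.Hom.unop_inj (RingCat.hom_ext (RingHom.ext fun _ => Subsingleton.elim _ _))

abbrev projectionSieve (k : Type u) [Ring k] (ι : Type) : Sieve (op (RingCat.of (ι → k))) :=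
  Sieve.generate (Presieve.ofArrows (fun _ : ι => op (RingCat.of k))
    fun i => (RingCat.ofHom (Pi.evalRingHom (fun _ : ι => k) i)).op)

def RingHom.diagonalMatrix {k R : Type*} [Semiring k] [Semiring R] (ι : Type*) [Fintype ι]
    [DecidableEq ι] (φ : k →+* R) : (ι → k) →+* Matrix ι ι R :=
  (Matrix.diagonalRingHom ι R).comp (φ.compLeft ι)

theorem RingHom.diagonalMatrix_single {k R : Type*} [Semiring k] [Semiring R] {ι : Type*}
    [Fintype ι] [DecidableEq ι] (φ : k →+* R) (j : ι) :
    φ.diagonalMatrix ι (Pi.single j 1) = Matrix.single j j 1 := by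
  have : φ.compLeft ι (Pi.single j 1) = Pi.single j 1 := by
    ext l
    change φ _ = _
    obtain rfl | hl := eq_or_ne l j <;> simp [*]
  rw [RingHom.diagonalMatrix, RingHom.comp_apply, this, Matrix.diagonalRingHom_apply,
    Matrix.diagonal_single]

theorem pullback_projectionSieve_diagonalMatrix_le {k R : Type u} [Ring k] [Ring R] {ι : Type}
    [Fintype ι] [DecidableEq ι] [Nontrivial ι] (φ : k →+* R) :
    (projectionSieve k ι).pullback (RingCat.ofHom (φ.diagonalMatrix ι)).op ≤
      Sieve.generate (Presieve.singleton
        (RingCat.ofHom (toTrivialRingHom (Matrix ι ι R))).op) := by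
  rintro Y g ⟨W, h, _, ⟨i⟩, hcomm⟩
  obtain ⟨j, hji⟩ := exists_ne i
  have hfactor := RingHom.congr_fun
    (congrArg RingCat.Hom.hom (congrArg Quiver.Hom.unop hcomm)) (Pi.single j 1)
  have hj : g.unop.hom (Matrix.single j j 1) = 0 := by
    simpa [RingHom.diagonalMatrix_single, hji] using hfactor.symm
  have := Matrix.subsingleton_of_ringHom_single_eq_zero g.unop.hom j hj
  exact RingCat.generate_singleton_toTrivialRingHom_op_apply g

theorem stmt_4 (k : Type u) [Ring k] (n : ℕ) (hn : 2 ≤ n)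
    (J : GrothendieckTopology RingCat.{u}ᵒᵖ)
    (hJ : Sieve.generate
        (Presieve.ofArrows (fun _ : Fin n => op (RingCat.of k))
          (fun i => (RingCat.ofHom (Pi.evalRingHom (fun _ : Fin n => k) i)).op)) ∈
      J (op (RingCat.of (Fin n → k))))
    (F : (RingCat.{u}ᵒᵖ)ᵒᵖ ⥤ Type u) (hF : Presieve.IsSheaf J F)
    (R : Type u) [Ring R] (φ : k →+* R) :
    Function.Bijective
      (F.map ((RingCat.ofHom (toTrivialRingHom (Matrix (Fin n) (Fin n) R))).op.op)) := by
  have : Nontrivial (Fin n) := Fin.nontrivial_iff_two_le.mpr hn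
  have hcov :=
    J.superset_covering (pullback_projectionSieve_diagonalMatrix_le φ) (J.pullback_stable _ hJ)
  exact ((Presieve.isSheafFor_iff_generate _).mpr (hF _ hcov)).bijective_map_of_mono
end

section
/- Let k be a nonzero unital ring and n ≥ 2 an integer. There is no Grothendieck topology J on RingCatᵒᵖ such that both: (i) the sieve on the object corresponding to kⁿ generated by the morphisms opposite to the projections πᵢ : kⁿ → k (i = 1,…,n) is J-covering, and (ii) the representable presheaf on RingCatᵒᵖ associated to the trivial ring — i.e., the functor RingCat → Set sending a ring R to the set of unital ring homomorphisms from the trivial ring 0 to R — is a J-sheaf. -/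
/-!
Pull the covering sieve back along the diagonal embedding `kⁿ → Mₙ(k)`. A ring map
`g : Mₙ(k) → Z` in the pulled-back sieve factors through some projection `πᵢ`, so `g Eᵢᵢ = 1`;
for `j ≠ i` this gives `g Eⱼⱼ = g (Eᵢᵢ Eⱼⱼ) = 0`, and then `1 = g (Eᵢⱼ Eⱼⱼ Eⱼᵢ) = 0`, so `Z = 0`.
Hence `Mₙ(k)` is covered by trivial rings only, over which `Hom(0, -)` has a (unique) compatible
family; an amalgamation would be a ring map `0 → Mₙ(k)`, impossible since `Mₙ(k) ≠ 0`.
-/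

universe u

open CategoryTheory Opposite

theorem Matrix.subsingleton_of_map_single_eq_one {m : Type*} [Fintype m] [DecidableEq m]
    {k Z : Type*} [Ring k] [Semiring Z] (v : Matrix m m k →+* Z) {i j : m} (hij : i ≠ j)
    (hv : v (Matrix.single i i 1) = 1) : Subsingleton Z := by
  have hj : v (Matrix.single j j 1) = 0 := by
    rw [← one_mul (v _), ← hv, ← map_mul, Matrix.single_mul_single_of_ne (h := hij), map_zero]
  have : v (Matrix.single i i 1) = v (Matrix.single i j 1) * v (Matrix.single j j 1) *
      v (Matrix.single j i 1) := by
    simp only [← map_mul, Matrix.single_mul_single_same, mul_one]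
  rw [hv, hj, mul_zero, zero_mul] at this
  exact subsingleton_of_zero_eq_one this.symm

theorem RingCat.subsingleton_of_isSheafFor_yoneda_punit {X : RingCat.{u}ᵒᵖ} {S : Sieve X}
    (hF : Presieve.IsSheafFor (yoneda.obj (op (RingCat.of PUnit.{u + 1}))) S.arrows)
    (htriv : ∀ ⦃Y : RingCat.{u}ᵒᵖ⦄ (f : Y ⟶ X), S f → Subsingleton Y.unop) :
    Subsingleton X.unop := by
  let x : Presieve.FamilyOfElements (yoneda.obj (op (RingCat.of PUnit.{u + 1}))) S.arrows :=
    fun Y f hf =>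
      have := htriv f hf
      have : Unique Y.unop := uniqueOfSubsingleton 0
      (RingCat.ofHom (RingEquiv.ofUnique : PUnit ≃+* Y.unop).toRingHom).op
  have hx : x.Compatible := fun _ _ _ _ _ _ _ _ _ _ =>
    Quiver.Hom.unop_inj <| RingCat.hom_ext <| RingHom.ext fun a => by
      rw [Subsingleton.elim a 0, map_zero, map_zero]
  obtain ⟨t, -⟩ := hF x hx
  exact t.unop.hom.codomain_trivial

theorem stmt_5 (k : Type u) [Ring k] [Nontrivial k] (n : ℕ) (hn : 2 ≤ n) :
    ¬ ∃ J : GrothendieckTopology RingCat.{u}ᵒᵖ,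
      (Sieve.generate
          (Presieve.ofArrows (fun _ : Fin n => op (RingCat.of k))
            (fun i => (RingCat.ofHom (Pi.evalRingHom (fun _ : Fin n => k) i)).op)) ∈
        J (op (RingCat.of (Fin n → k)))) ∧
      Presieve.IsSheaf J (yoneda.obj (op (RingCat.of PUnit.{u + 1}))) := by
  rintro ⟨J, hS, hF⟩
  have : Nontrivial (Fin n) := Fin.nontrivial_iff_two_le.mpr hn
  let diag : op (RingCat.of (Matrix (Fin n) (Fin n) k)) ⟶ op (RingCat.of (Fin n → k)) :=
    (RingCat.ofHom (Matrix.diagonalRingHom (Fin n) k)).op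
  refine not_subsingleton (Matrix (Fin n) (Fin n) k) <|
    RingCat.subsingleton_of_isSheafFor_yoneda_punit (hF _ (J.pullback_stable diag hS)) ?_
  rintro Y g ⟨W, h, -, ⟨i⟩, hcomm⟩
  obtain ⟨j, hij⟩ := exists_ne i
  refine Matrix.subsingleton_of_map_single_eq_one g.unop.hom hij.symm ?_
  have hgi := congr($(congrArg Quiver.Hom.unop hcomm).hom (Pi.single i 1))
  simpa [diag, Matrix.diagonal_single] using hgi.symm
end

section
/- There is no Grothendieck topology J on RingCatᵒᵖ such that both: (i) for every commutative ring A, every natural number m, and every family of elements r₁,…,r_m ∈ A generating the unit ideal of A, the sieve on the object of RingCatᵒᵖ corresponding to A generated by the morphisms opposite to the canonical localization maps A → A[rᵢ⁻¹] (i = 1,…,m) is J-covering; and (ii) the functor RingCat → Set sending a ring R to the set of unital ring homomorphisms from the trivial ring 0 to R (the representable presheaf on RingCatᵒᵖ associated to the zero ring) is a J-sheaf. -/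
/-!
Take `A = ℤ²` with its complementary idempotents `e₀, e₁`, which generate the unit ideal, and
pull the Zariski cover `{A → A[eᵢ⁻¹]}` back along the diagonal embedding `A → M₂(ℤ)`. A ring map
`ψ` out of `M₂(ℤ)` that inverts the idempotent `Eᵢᵢ` sends it to `1`; then `Eᵢⱼ Eᵢᵢ = 0` forces
`ψ Eᵢⱼ = 0`, and `1 = ψ (Eᵢⱼ Eⱼᵢ) = 0`. So every member of the pulled-back covering sieve on
`M₂(ℤ)` is a zero ring and receives exactly one map from the zero ring. These maps form a matching
family for `Hom(0, -)`; were it a sheaf, they would glue to a ring map `0 → M₂(ℤ)`, which does not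
exist.
-/

universe u

open CategoryTheory Opposite

theorem Ideal.span_range_pi_single_one_eq_top {ι R : Type*} [Fintype ι] [DecidableEq ι]
    [CommSemiring R] : Ideal.span (Set.range fun i : ι => (Pi.single i 1 : ι → R)) = ⊤ := by
  rw [Ideal.eq_top_iff_one, ← Finset.univ_sum_single (1 : ι → R)]
  exact Ideal.sum_mem _ fun i _ => Ideal.subset_span ⟨i, rfl⟩

theorem Matrix.subsingleton_of_isUnit_map_single {n R C : Type*} [DecidableEq n] [Fintype n]
    [Nontrivial n] [Ring R] [Ring C] (ψ : Matrix n n R →+* C) (i : n)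
    (h : IsUnit (ψ (single i i 1))) : Subsingleton C := by
  obtain ⟨j, hji⟩ := exists_ne i
  have hidem : IsIdempotentElem (ψ (single i i 1)) := by
    rw [IsIdempotentElem, ← map_mul, single_mul_single_same, one_mul]
  have hone : ψ (single i i 1) = 1 := (IsIdempotentElem.iff_eq_one_of_isUnit h).mp hidem
  have hzero : ψ (single i j 1) = 0 := by
    rw [← mul_one (ψ _), ← hone, ← map_mul, single_mul_single_of_ne 1 i j i hji, map_zero]
  refine subsingleton_of_zero_eq_one ?_
  rw [← hone, ← one_mul (1 : R), ← single_mul_single_same 1 i j i, map_mul, hzero, zero_mul]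

theorem RingHom.subsingleton_of_subsingleton_domain {R S : Type*} [NonAssocSemiring R]
    [NonAssocSemiring S] [Subsingleton R] : Subsingleton (R →+* S) :=
  ⟨fun f _ => RingHom.ext fun _ => haveI := f.codomain_trivial; Subsingleton.elim _ _⟩

theorem CategoryTheory.Presieve.IsSheaf.nonempty_of_mem {C : Type*} [Category C]
    {J : GrothendieckTopology C} {P : Cᵒᵖ ⥤ Type*} (hP : Presieve.IsSheaf J P)
    (hsub : ∀ Y, Subsingleton (P.obj Y)) {X : C} {S : Sieve X} (hS : S ∈ J X)
    (h : ∀ ⦃Y⦄ (f : Y ⟶ X), S f → Nonempty (P.obj (op Y))) : Nonempty (P.obj (op X)) :=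
  let x : FamilyOfElements P S.arrows := fun _ f hf => (h f hf).some
  ⟨(hP S hS x fun _ _ _ _ _ _ _ _ _ _ => (hsub _).elim _ _).exists.choose⟩

namespace RingCat

theorem subsingleton_op_hom_punit (Y : RingCat.{u}ᵒᵖ) :
    Subsingleton (Y ⟶ op (RingCat.of PUnit.{u + 1})) :=
  ⟨fun _ _ => Quiver.Hom.unop_inj <| hom_ext <|
    RingHom.subsingleton_of_subsingleton_domain.elim _ _⟩

theorem nonempty_op_hom_punit_iff (Y : RingCat.{u}ᵒᵖ) :
    Nonempty (Y ⟶ op (RingCat.of PUnit.{u + 1})) ↔ Subsingleton Y.unop := by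
  refine ⟨fun ⟨f⟩ => f.unop.hom.codomain_trivial, fun _ => ?_⟩
  let : Unique Y.unop := uniqueOfSubsingleton 0
  exact ⟨(ofHom (RingEquiv.ofUnique : PUnit ≃+* Y.unop).toRingHom).op⟩

end RingCat

abbrev localizationSieve {A : Type u} [CommRing A] {ι : Type*} (r : ι → A) :
    Sieve (op (RingCat.of A)) :=
  Sieve.generate (Presieve.ofArrows (fun i => op (RingCat.of (Localization.Away (r i))))
    (fun i => (RingCat.ofHom (algebraMap A (Localization.Away (r i)))).op))

theorem exists_isUnit_of_mem_pullback_localizationSieve {A B : Type u} [CommRing A] [Ring B]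
    {ι : Type*} (r : ι → A) (φ : A →+* B) {Y : RingCat.{u}ᵒᵖ} {f : Y ⟶ op (RingCat.of B)}
    (hf : ((localizationSieve r).pullback (RingCat.ofHom φ).op).arrows f) :
    ∃ i, IsUnit (f.unop.hom (φ (r i))) := by
  obtain ⟨Z, g, _, ⟨i⟩, hcomm⟩ := hf
  refine ⟨i, ?_⟩
  have hcomm' := RingHom.congr_fun (congrArg RingCat.Hom.hom (congrArg Quiver.Hom.unop hcomm)) (r i)
  simp only [unop_comp, Quiver.Hom.unop_op, RingCat.hom_comp, RingCat.hom_ofHom,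
    RingHom.comp_apply] at hcomm'
  rw [← hcomm']
  exact (IsLocalization.Away.algebraMap_isUnit (r i)).map g.unop.hom

theorem stmt_6 :
    ¬ ∃ J : GrothendieckTopology RingCat.{u}ᵒᵖ,
      (∀ (A : Type u) [CommRing A] (m : ℕ) (r : Fin m → A),
        Ideal.span (Set.range r) = ⊤ →
        Sieve.generate
            (Presieve.ofArrows (fun i : Fin m => op (RingCat.of (Localization.Away (r i))))
              (fun i => (RingCat.ofHom (algebraMap A (Localization.Away (r i)))).op)) ∈
          J (op (RingCat.of A))) ∧
      Presieve.IsSheaf J (yoneda.obj (op (RingCat.of PUnit.{u + 1}))) := by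
  rintro ⟨J, hcov, hsheaf⟩
  let r : Fin 2 → Fin 2 → ULift.{u} ℤ := fun i => Pi.single i 1
  let φ := Matrix.diagonalRingHom (Fin 2) (ULift.{u} ℤ)
  have hS := J.pullback_stable (RingCat.ofHom φ).op
    (hcov _ 2 r Ideal.span_range_pi_single_one_eq_top)
  obtain ⟨t⟩ := hsheaf.nonempty_of_mem (fun Y => RingCat.subsingleton_op_hom_punit Y.unop) hS
    fun Y f hf => by
      obtain ⟨i, hi⟩ := exists_isUnit_of_mem_pullback_localizationSieve r φ hf
      rw [Matrix.diagonalRingHom_apply, Matrix.diagonal_single] at hi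
      exact (RingCat.nonempty_op_hom_punit_iff Y).mpr
        (Matrix.subsingleton_of_isUnit_map_single f.unop.hom i hi)
  exact not_subsingleton (Matrix (Fin 2) (Fin 2) (ULift.{u} ℤ))
    ((RingCat.nonempty_op_hom_punit_iff _).mp ⟨t⟩)
end

section
/- There is no Grothendieck topology J on RingCatᵒᵖ such that both: (i) for every commutative ring A, every natural number m, and every family of elements r₁,…,r_m ∈ A generating the unit ideal of A, the sieve on the object of RingCatᵒᵖ corresponding to A generated by the morphisms opposite to the canonical localization maps A → A[rᵢ⁻¹] (i = 1,…,m) is J-covering; and (ii) J is subcanonical, i.e., for every ring S the representable presheaf Hom_{RingCatᵒᵖ}(−, S) is a J-sheaf. -/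
/-!
Subcanonicity makes the forgetful functor, represented by `ℤ⟨x⟩`, a separated presheaf: two
elements of a ring `R`, commutative or not, that agree in every ring `B` of a covering sieve
on `R` are equal. Pull the Zariski cover of `k[X]` by `X, 1 - X` back along the ring map
`k[X] → R = End_k(k[X])` sending `f` to multiplication by `f`. In each `B` of the pulled back
sieve, `u = X·` or `1 - u` becomes invertible. Both have left inverses `v`, `v'` (`divX` and its
conjugate by `X ↦ 1 - X`), so `1 - u v` or `1 - (1 - u) v'` vanishes in `B`, hence so does their
product. But that product is `f ↦ f(1)`, which is nonzero.
-/

universe u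

open CategoryTheory Opposite Polynomial

section LeftInverse

variable {R B : Type*} [Ring R] [Ring B]

lemma map_one_sub_mul_eq_zero_of_isUnit {u v : R} (hvu : v * u = 1) (g : R →+* B)
    (hu : IsUnit (g u)) : g (1 - u * v) = 0 := by
  obtain ⟨w, hw⟩ := hu
  have hv : g v = ↑w⁻¹ := Units.mul_eq_one_iff_eq_inv.1 (by rw [hw, ← map_mul, hvu, map_one])
  rw [map_sub, map_one, map_mul, ← hw, hv, Units.mul_inv, sub_self]

lemma map_mul_eq_zero_of_isUnit_or_isUnit {u v u' v' : R} (hvu : v * u = 1) (hvu' : v' * u' = 1)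
    (g : R →+* B) (h : IsUnit (g u) ∨ IsUnit (g u')) :
    g ((1 - u * v) * (1 - u' * v')) = 0 := by
  rw [map_mul]
  rcases h with hu | hu'
  · rw [map_one_sub_mul_eq_zero_of_isUnit hvu g hu, zero_mul]
  · rw [map_one_sub_mul_eq_zero_of_isUnit hvu' g hu', mul_zero]

end LeftInverse

namespace Polynomial

variable (k : Type*) [CommRing k]

noncomputable def divXₗ : Module.End k k[X] where
  toFun := divX
  map_add' _ _ := divX_add
  map_smul' c p := by ext; simp

noncomputable def divOneSubXₗ : Module.End k k[X] :=
  (aeval (1 - X : k[X])).toLinearMap * divXₗ k * (aeval (1 - X : k[X])).toLinearMap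

variable {k}

lemma divX_X_mul (p : k[X]) : divX (X * p) = p := by
  ext n
  simp [coeff_X_mul]

lemma aeval_one_sub_X_one_sub_X : aeval (1 - X : k[X]) (1 - X : k[X]) = X := by
  rw [map_sub (aeval _), aeval_X, map_one, sub_sub_cancel]

lemma aeval_one_sub_X_aeval_one_sub_X (p : k[X]) :
    aeval (1 - X : k[X]) (aeval (1 - X : k[X]) p) = p := by
  rw [← aeval_algHom_apply, aeval_one_sub_X_one_sub_X, aeval_X_left_apply]

variable (k)

lemma divXₗ_mul_lmul_X : divXₗ k * Algebra.lmul k k[X] X = 1 :=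
  LinearMap.ext divX_X_mul

lemma divOneSubXₗ_mul_lmul_one_sub_X : divOneSubXₗ k * Algebra.lmul k k[X] (1 - X) = 1 := by
  refine LinearMap.ext fun p => ?_
  simp only [divOneSubXₗ, Module.End.mul_apply, Module.End.one_apply, AlgHom.toLinearMap_apply,
    Algebra.coe_lmul_eq_mul, LinearMap.mul_apply', divXₗ, LinearMap.coe_mk, AddHom.coe_mk]
  rw [map_mul, aeval_one_sub_X_one_sub_X, divX_X_mul, aeval_one_sub_X_aeval_one_sub_X]

lemma one_sub_lmul_X_mul_divXₗ_mul_ne_zero [Nontrivial k] :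
    (1 - Algebra.lmul k k[X] X * divXₗ k) *
      (1 - Algebra.lmul k k[X] (1 - X) * divOneSubXₗ k) ≠ 0 := by
  intro h
  have := LinearMap.congr_fun h 1
  simp [divOneSubXₗ, divXₗ] at this

end Polynomial

namespace RingCat

lemma eq_of_forall_sieve_apply_eq {J : GrothendieckTopology RingCat.{u}ᵒᵖ}
    (hJ : ∀ S : RingCat.{u}ᵒᵖ, Presieve.IsSheaf J (yoneda.obj S))
    {R : RingCat.{u}} {T : Sieve (op R)} (hT : T ∈ J (op R)) {a b : R}
    (h : ∀ (B : RingCat.{u}) (g : R ⟶ B), T g.op → g a = g b) : a = b := by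
  let ev (x : R) : of (FreeRing PUnit.{u + 1}) ⟶ R := ofHom (FreeRing.lift fun _ => x)
  have hev : ev a = ev b := Quiver.Hom.op_inj <|
    ((hJ _ T hT).isSeparatedFor.ext fun Y f hf => Quiver.Hom.unop_inj <| hom_ext <|
      FreeRing.hom_ext fun _ => by simpa [ev] using h Y.unop f.unop hf)
  simpa [ev] using congr($hev (FreeRing.of PUnit.unit))

lemma exists_isUnit_of_pullback_generate_ofArrows_away {A : Type u} [CommRing A] {m : ℕ}
    (r : Fin m → A) {R B : RingCat.{u}} (φ : of A ⟶ R) (g : R ⟶ B)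
    (hg : (Sieve.generate (Presieve.ofArrows (fun i => op (of (Localization.Away (r i))))
      (fun i => (ofHom (algebraMap A (Localization.Away (r i)))).op))).pullback φ.op g.op) :
    ∃ i, IsUnit (g (φ (r i))) := by
  obtain ⟨_, _, _, ⟨i⟩, hcomp⟩ := hg
  refine ⟨i, ?_⟩
  have := congr(($(congrArg Quiver.Hom.unop hcomp)).hom (r i))
  simp only [unop_comp, Quiver.Hom.unop_op, hom_comp, RingHom.comp_apply, hom_ofHom] at this
  rw [← this]
  exact (IsLocalization.Away.algebraMap_isUnit (r i)).map _

end RingCat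

theorem stmt_7 :
    ¬ ∃ J : GrothendieckTopology RingCat.{u}ᵒᵖ,
      (∀ (A : Type u) [CommRing A] (m : ℕ) (r : Fin m → A),
        Ideal.span (Set.range r) = ⊤ →
        Sieve.generate
            (Presieve.ofArrows (fun i : Fin m => op (RingCat.of (Localization.Away (r i))))
              (fun i => (RingCat.ofHom (algebraMap A (Localization.Away (r i)))).op)) ∈
          J (op (RingCat.of A))) ∧
      (∀ S : RingCat.{u}ᵒᵖ, Presieve.IsSheaf J (yoneda.obj S)) := by
  rintro ⟨J, hcov, hsheaf⟩
  let k := ULift.{u} ℤ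
  let φ : RingCat.of k[X] ⟶ RingCat.of (Module.End k k[X]) :=
    RingCat.ofHom (Algebra.lmul k k[X]).toRingHom
  have hspan : Ideal.span (Set.range ![(X : k[X]), 1 - X]) = ⊤ := by
    have := Ideal.add_mem (Ideal.span (Set.range ![(X : k[X]), 1 - X]))
      (Ideal.subset_span ⟨0, rfl⟩) (Ideal.subset_span ⟨1, rfl⟩)
    rwa [Matrix.cons_val_zero, Matrix.cons_val_one, Matrix.cons_val_zero, add_sub_cancel,
      ← Ideal.eq_top_iff_one] at this
  refine one_sub_lmul_X_mul_divXₗ_mul_ne_zero k <| RingCat.eq_of_forall_sieve_apply_eq hsheaf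
    (J.pullback_stable φ.op (hcov _ 2 _ hspan)) fun B g hg => ?_
  obtain ⟨i, hi⟩ := RingCat.exists_isUnit_of_pullback_generate_ofArrows_away _ φ g hg
  rw [map_zero]
  refine map_mul_eq_zero_of_isUnit_or_isUnit (divXₗ_mul_lmul_X k)
    (divOneSubXₗ_mul_lmul_one_sub_X k) g.hom ?_
  fin_cases i
  · exact Or.inl hi
  · exact Or.inr hi
end

section
/- Let k be a commutative ring and n ≥ 2 an integer, and let X be the prime spectrum of kⁿ with its Zariski topology. Let 𝒪_X denote the structure sheaf of Spec(kⁿ), regarded as a sheaf of (not necessarily commutative) rings on X via the forgetful functor from commutative rings to rings. Let F be a sheaf of rings on X and α : 𝒪_X → F a morphism of sheaves of rings. Suppose there is a unital ring homomorphism β : Mₙ(k) → F(X) from the n×n matrix ring over k to the global sections of F such that the composite kⁿ → 𝒪_X(X) → F(X) (the canonical map from kⁿ to global sections of the structure sheaf followed by the global component of α) equals β ∘ d, where d : kⁿ → Mₙ(k) is the diagonal embedding. Then F is the zero sheaf: F(U) is the trivial ring for every open set U ⊆ X. -/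
/-!
Let `eᵢ ∈ kⁿ` be the standard idempotents. On the basic open `D(eᵢ)` the section `eᵢ` is an
idempotent unit, hence `1`, and every `eⱼ` with `j ≠ i` becomes `0`. For `j ≠ i`, the restrictions
to `D(eᵢ)` of `x = β(E_ij)` and `y = β(E_ji)` satisfy `x y = β(E_ii) = 1` and `y x = β(E_jj) = 0`,
which forces `1 = 0`. Since `∑ eᵢ = 1`, the `D(eᵢ)` cover `Spec kⁿ`, so `F` vanishes locally and
therefore, being a sheaf, everywhere.
-/

universe u v

open CategoryTheory Opposite AlgebraicGeometry TopologicalSpace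

theorem subsingleton_of_mul_eq_one_of_mul_eq_zero {M : Type*} [MonoidWithZero M] {x y : M}
    (hxy : x * y = 1) (hyx : y * x = 0) : Subsingleton M := by
  have hy : y = 0 := by
    calc y = y * (x * y) := by rw [hxy, mul_one]
      _ = 0 := by rw [← mul_assoc, hyx, zero_mul]
  exact subsingleton_of_zero_eq_one (by rw [← hxy, hy, mul_zero])

theorem Matrix.subsingleton_of_map_single {ι k S : Type*} [Fintype ι] [DecidableEq ι]
    [CommRing k] [Semiring S] (φ : Matrix ι ι k →+* S) {i j : ι}
    (hi : φ (Matrix.single i i 1) = 1) (hj : φ (Matrix.single j j 1) = 0) : Subsingleton S :=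
  subsingleton_of_mul_eq_one_of_mul_eq_zero (x := φ (Matrix.single i j 1))
    (y := φ (Matrix.single j i 1))
    (by rw [← map_mul, Matrix.single_mul_single_same, mul_one, hi])
    (by rw [← map_mul, Matrix.single_mul_single_same, mul_one, hj])

theorem PrimeSpectrum.exists_mem_basicOpen_of_sum_eq_one {R ι : Type*} [CommRing R]
    [Fintype ι] {e : ι → R} (he : ∑ i, e i = 1) (x : PrimeSpectrum R) :
    ∃ i, x ∈ PrimeSpectrum.basicOpen (e i) := by
  by_contra! h
  simp only [PrimeSpectrum.mem_basicOpen, not_not] at h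
  exact x.isPrime.ne_top ((Ideal.eq_top_iff_one _).mpr (he ▸ Ideal.sum_mem _ fun i _ => h i))

theorem TopCat.Presheaf.subsingleton_of_le {X : TopCat.{u}} (F : X.Presheaf RingCat.{u})
    {U V : Opens X} (hVU : V ≤ U) [Subsingleton (F.obj (op U))] : Subsingleton (F.obj (op V)) :=
  subsingleton_of_zero_eq_one <| by
    rw [← map_zero (F.map (homOfLE hVU).op).hom, ← map_one (F.map (homOfLE hVU).op).hom,
      Subsingleton.elim (0 : F.obj (op U)) 1]

theorem TopCat.Sheaf.subsingleton_of_locally {X : TopCat.{u}} (F : X.Sheaf RingCat.{u})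
    (U : Opens X) (h : ∀ x ∈ U, ∃ V : Opens X, x ∈ V ∧ Subsingleton (F.obj.obj (op V))) :
    Subsingleton (F.obj.obj (op U)) := by
  choose V hxV hV using fun x : U => h x x.2
  refine subsingleton_of_forall_eq 0 fun s => ?_
  refine F.eq_of_locally_eq' (fun x => U ⊓ V x) U (fun x => homOfLE inf_le_left)
    (fun x hx => Opens.mem_iSup.mpr ⟨⟨x, hx⟩, hx, hxV ⟨x, hx⟩⟩) s 0 fun x => ?_
  have := hV x
  have := TopCat.Presheaf.subsingleton_of_le F.obj (inf_le_right : U ⊓ V x ≤ V x)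
  exact Subsingleton.elim _ _

namespace AlgebraicGeometry.StructureSheaf

variable {R : Type u} [CommRing R] {U : Opens (PrimeSpectrum.Top R)}

theorem isUnit_toOpen_basicOpen (f : R) : IsUnit (toOpen R (PrimeSpectrum.basicOpen f) f) :=
  IsLocalization.Away.algebraMap_isUnit
    (S := (structureSheafInType R R).obj.obj (op (PrimeSpectrum.basicOpen f))) f

theorem isUnit_toOpen_of_le_basicOpen {f : R} (hU : U ≤ PrimeSpectrum.basicOpen f) :
    IsUnit (toOpen R U f) :=
  (isUnit_toOpen_basicOpen f).map ((Spec.structureSheaf R).obj.map (homOfLE hU).op).hom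

theorem toOpen_eq_one_of_le_basicOpen {e : R} (he : IsIdempotentElem e)
    (hU : U ≤ PrimeSpectrum.basicOpen e) : toOpen R U e = 1 :=
  (IsIdempotentElem.iff_eq_one_of_isUnit (isUnit_toOpen_of_le_basicOpen hU)).mp (he.map _)

theorem toOpen_eq_zero_of_mul_eq_zero {e f : R} (hef : e * f = 0)
    (hU : U ≤ PrimeSpectrum.basicOpen e) : toOpen R U f = 0 :=
  (isUnit_toOpen_of_le_basicOpen hU).mul_right_eq_zero.mp (by rw [← map_mul, hef, map_zero])

end AlgebraicGeometry.StructureSheaf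

theorem subsingleton_obj_basicOpen_single {ι : Type v} {k : Type u} [Fintype ι] [DecidableEq ι]
    [Nontrivial ι] [CommRing k] (F : (PrimeSpectrum.Top (ι → k)).Presheaf RingCat.{max v u})
    (α : (Spec.structureSheaf (ι → k)).obj ⋙ forget₂ CommRingCat RingCat ⟶ F)
    (β : Matrix ι ι k →+* F.obj (op ⊤))
    (hcomp : ∀ a : ι → k,
      α.app (op ⊤) (StructureSheaf.toOpen (ι → k) ⊤ a) = β (Matrix.diagonal a)) (i : ι) :
    Subsingleton (F.obj (op (PrimeSpectrum.basicOpen (Pi.single i 1 : ι → k)))) := by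
  obtain ⟨j, hji⟩ := exists_ne i
  have he := CompleteOrthogonalIdempotents.single fun _ : ι => k
  set V : Opens (PrimeSpectrum.Top (ι → k)) := PrimeSpectrum.basicOpen (Pi.single i 1)
  let φ := (F.map (homOfLE (le_top : V ≤ ⊤)).op).hom.comp β
  have hφ (a : ι → k) : φ (Matrix.diagonal a) = α.app (op V) (StructureSheaf.toOpen _ V a) := by
    rw [RingHom.comp_apply, ← hcomp]
    exact (ConcreteCategory.congr_hom (α.naturality (homOfLE le_top).op) _).symm
  refine Matrix.subsingleton_of_map_single φ (i := i) (j := j) ?_ ?_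
  · rw [← Matrix.diagonal_single, hφ,
      StructureSheaf.toOpen_eq_one_of_le_basicOpen (he.idem i) le_rfl, map_one]
  · rw [← Matrix.diagonal_single, hφ,
      StructureSheaf.toOpen_eq_zero_of_mul_eq_zero (he.ortho hji.symm) le_rfl, map_zero]

theorem stmt_8 (k : Type u) [CommRing k] (n : ℕ) (hn : 2 ≤ n)
    (F : TopCat.Sheaf RingCat.{u} (PrimeSpectrum.Top (Fin n → k)))
    (α : (Spec.structureSheaf (Fin n → k)).val ⋙ forget₂ CommRingCat RingCat ⟶ F.val)
    (β : Matrix (Fin n) (Fin n) k →+* F.val.obj (op ⊤))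
    (hcomp : ∀ a : Fin n → k,
      α.app (op ⊤) (StructureSheaf.toOpen (Fin n → k) ⊤ a) =
        β (Matrix.diagonalRingHom (Fin n) k a)) :
    ∀ U : Opens (PrimeSpectrum.Top (Fin n → k)), Subsingleton (F.val.obj (op U)) := by
  have : Nontrivial (Fin n) := Fin.nontrivial_iff_two_le.mpr hn
  intro U
  refine F.subsingleton_of_locally U fun x _ => ?_
  obtain ⟨i, hi⟩ := PrimeSpectrum.exists_mem_basicOpen_of_sum_eq_one
    (CompleteOrthogonalIdempotents.single fun _ : Fin n => k).complete x
  exact ⟨_, hi, subsingleton_obj_basicOpen_single F.obj α β hcomp i⟩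
end

section
/- Let X be a topological space, k a unital ring, and n ≥ 2 an integer. Let U₁,…,Uₙ be open subsets of X whose union is X. Let F be a sheaf of rings on X, let β : Mₙ(k) → F(X) be a unital ring homomorphism, and for each j let γⱼ : k → F(Uⱼ) be a unital ring homomorphism. Suppose that for each j ∈ {1,…,n}, the composite of β with the diagonal embedding d : kⁿ → Mₙ(k) followed by the restriction map F(X) → F(Uⱼ) equals γⱼ ∘ πⱼ, where πⱼ : kⁿ → k is the j-th projection. Then F is the zero sheaf: F(V) is the trivial ring for every open set V ⊆ X. -/
universe u

open CategoryTheory Opposite TopologicalSpace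

/-! The idempotents `E_ii` of `Mₙ(k)` are all conjugate, since `E_jj = E_ji * E_ii * E_ij`.
On `U_j` the restriction of `β` sends `E_jj = d(e_j)` to `γ_j 1 = 1`, while for `i ≠ j` it sends
`E_ii = d(e_i)` to `γ_j 0 = 0`, so `1 = 0` in `F(U_j)`. A section of `F` over `V` is determined by
its restrictions to the cover `V ⊓ U_j`, all of which live in zero rings. -/

theorem Matrix.subsingleton_of_ringHom_map_single {ι k R : Type*} [Fintype ι] [DecidableEq ι]
    [Ring k] [Semiring R] (f : Matrix ι ι k →+* R) {i j : ι} (hi : f (Matrix.single i i 1) = 0)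
    (hj : f (Matrix.single j j 1) = 1) : Subsingleton R := by
  have hconj : Matrix.single j i (1 : k) * Matrix.single i i 1 * Matrix.single i j 1 =
      Matrix.single j j 1 := by
    rw [Matrix.single_mul_single_same, Matrix.single_mul_single_same, one_mul, one_mul]
  refine subsingleton_of_zero_eq_one ?_
  rw [← hj, ← hconj, map_mul, map_mul, hi, mul_zero, zero_mul]

theorem TopCat.Sheaf.subsingleton_of_subsingleton_cover {X : TopCat.{u}}
    (F : TopCat.Sheaf RingCat.{u} X) {ι : Type*} (U : ι → Opens X) (hU : (⨆ j, U j) = ⊤)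
    (hsub : ∀ j, Subsingleton (F.obj.obj (op (U j)))) (V : Opens X) :
    Subsingleton (F.obj.obj (op V)) := by
  have hsubV : ∀ j, Subsingleton (F.obj.obj (op (V ⊓ U j))) := fun j =>
    (F.obj.map (homOfLE (inf_le_right : V ⊓ U j ≤ U j)).op).hom.codomain_trivial
  have hcover : V ≤ ⨆ j, V ⊓ U j := by
    rw [← inf_iSup_eq, hU, inf_top_eq]
  refine ⟨fun s t => F.eq_of_locally_eq' (fun j => V ⊓ U j) V (fun _ => homOfLE inf_le_left)
    hcover s t fun j => ?_⟩
  exact (hsubV j).elim _ _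

theorem stmt_9 (X : TopCat.{u}) (k : Type u) [Ring k] (n : ℕ) (hn : 2 ≤ n)
    (U : Fin n → Opens X) (hU : (⨆ j, U j) = ⊤)
    (F : TopCat.Sheaf RingCat.{u} X)
    (β : Matrix (Fin n) (Fin n) k →+* F.val.obj (op ⊤))
    (γ : ∀ j : Fin n, k →+* F.val.obj (op (U j)))
    (hcomp : ∀ (j : Fin n) (a : Fin n → k),
      F.val.map (homOfLE (le_top : U j ≤ ⊤)).op (β (Matrix.diagonalRingHom (Fin n) k a)) =
        γ j (a j)) :
    ∀ V : Opens X, Subsingleton (F.val.obj (op V)) := by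
  have : Nontrivial (Fin n) := Fin.nontrivial_iff_two_le.mpr hn
  refine F.subsingleton_of_subsingleton_cover U hU fun j => ?_
  obtain ⟨i, hij⟩ := exists_ne j
  let restrictβ := (F.obj.map (homOfLE (le_top : U j ≤ ⊤)).op).hom.comp β
  have hrestrict :
      ∀ l, restrictβ (Matrix.single l l 1) = γ j ((Pi.single l 1 : Fin n → k) j) := by
    intro l
    have h := hcomp j (Pi.single l 1)
    rwa [Matrix.diagonalRingHom_apply, Matrix.diagonal_single] at h
  refine Matrix.subsingleton_of_ringHom_map_single restrictβ (i := i) (j := j) ?_ ?_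
  · rw [hrestrict, Pi.single_eq_of_ne' hij, map_zero]
  · rw [hrestrict, Pi.single_eq_same, map_one]
end
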